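/- Let G be an amenable group and let A be a finite set. Then every strongly irreducible subshift X ⊆ A^G is surjunctive: every injective cellular automaton τ : X → X is surjective. -/

import Mathlib

open Pointwise Filter

variable {G : Type*} [Group G]

/-- The shift action of `G` on configurations: `(g • x)(h) = x(g⁻¹h)`. -/
def shift {A : Type*} (g : G) (x : G → A) : G → A := fun h => x (g⁻¹ * h)

/-- A subshift: a closed, shift-invariant subset of `A^G` (prodiscrete topology). -/
def IsSubshift {A : Type*} [TopologicalSpace A] (X : Set (G → A)) : Prop :=
  IsClosed X ∧ ∀ g : G, ∀ x ∈ X, shift g x ∈ X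

/-- The `Δ`-neighborhood `Ω^{+Δ} = ΩΔ⁻¹ = {g : gΔ ∩ Ω ≠ ∅}`. -/
def plusNbhd (Ω Δ : Set G) : Set G := {g : G | ∃ d ∈ Δ, g * d ∈ Ω}

/-- `Δ`-irreducibility of a subshift. -/
def DeltaIrreducible {A : Type*} (Δ : Finset G) (X : Set (G → A)) : Prop :=
  ∀ Ω₁ Ω₂ : Finset G,
    plusNbhd (Ω₁ : Set G) (Δ : Set G) ∩ (Ω₂ : Set G) = ∅ →
    ∀ x₁ ∈ X, ∀ x₂ ∈ X,
      ∃ x ∈ X, (∀ g ∈ Ω₁, x g = x₁ g) ∧ (∀ g ∈ Ω₂, x g = x₂ g)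

/-- Strong irreducibility: `Δ`-irreducible for some finite `Δ ⊆ G`. -/
def StronglyIrreducible {A : Type*} (X : Set (G → A)) : Prop :=
  ∃ Δ : Finset G, DeltaIrreducible Δ X

/-- A cellular automaton between subshifts `X ⊆ A^G` and `Y ⊆ B^G`:
a map that sends `X` into `Y`, is continuous on `X`, and is `G`-equivariant on `X`. -/
def IsCellularAutomaton {A B : Type*} [TopologicalSpace A] [TopologicalSpace B]
    (X : Set (G → A)) (Y : Set (G → B)) (τ : (G → A) → (G → B)) : Prop :=
  Set.MapsTo τ X Y ∧ ContinuousOn τ X ∧ ∀ g : G, ∀ x ∈ X, τ (shift g x) = shift g (τ x)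

/-- Pre-injectivity of a map on a subshift `X`. -/
def PreInjective {A B : Type*} (X : Set (G → A)) (τ : (G → A) → (G → B)) : Prop :=
  ∀ x₁ ∈ X, ∀ x₂ ∈ X, {g : G | x₁ g ≠ x₂ g}.Finite → τ x₁ = τ x₂ → x₁ = x₂

/-- A Følner net for `G`, indexed by a directed preorder `J`. -/
def IsFolnerNet {J : Type*} [Preorder J] (F : J → Finset G) : Prop :=
  (∀ j, (F j).Nonempty) ∧
  ∀ E : Finset G,
    Tendsto (fun j => ((plusNbhd (F j : Set G) (E : Set G) \ (F j : Set G)).ncard : ℝ) /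
        ((F j).card : ℝ)) atTop (nhds 0)

/-- The entropy of a subset `X ⊆ A^G` with respect to a Følner net `F`. -/
noncomputable def entropy {J A : Type*} [Preorder J] (F : J → Finset G) (X : Set (G → A)) : ℝ :=
  limsup (fun j => Real.log (((Set.restrict (F j : Set G)) '' X).ncard : ℝ) / ((F j).card : ℝ))
    atTop

/-- Topological mixing for a subshift (open subsets of `X` are traces of ambient opens). -/
def TopologicallyMixing {A : Type*} [TopologicalSpace A] (X : Set (G → A)) : Prop :=
  ∀ U V : Set (G → A), IsOpen U → IsOpen V → (U ∩ X).Nonempty → (V ∩ X).Nonempty →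
    ∃ F : Finset G, ∀ g : G, g ∉ F → ((U ∩ X) ∩ (shift g '' (V ∩ X))).Nonempty

/-- An `(E,E')`-tiling. -/
def IsTiling (E E' T : Set G) : Prop :=
  T.PairwiseDisjoint (fun g => g • E) ∧ (⋃ g ∈ T, g • E') = Set.univ

/-!
Suppose `τ` is injective but misses some `z ∈ X`. Its image `Y = τ(X)` is a subshift, so it omits
the pattern of `z` on some finite `E`; by compactness `τ⁻¹ : Y → X` is again a cellular automaton,
with some memory set `M`. Put `D = E (1 ∪ Δ)`, `m = |A|^|D|`, and pack a maximal family `T` of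
disjoint translates `tD` into a finite `F ⊆ G`; up to the `D`-boundary of `F`, `|T|` is
proportional to `|F|`. Two counts of the patterns on `F` now conflict:
* through `τ⁻¹`, `X` has at most `|A|^|FM \ F|` times as many patterns on `F` as `Y`;
* by `Δ`-irreducibility one may glue copies of `z|E` into any pattern of `Y` at the tiles of any
  `S ⊆ T`; the glued pattern of `X` remembers `S` and comes from at most `m^|S|` patterns of `Y`,
  so `X` has at least `((m + 1) / m)^|T|` times as many patterns on `F` as `Y`.
Hence `|T| log ((m + 1) / m) ≤ |FM \ F| log |A|`, which fails along a Følner net.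
-/

theorem Set.ncard_image_le_ncard_image_of_eq_imp_eq {α β γ : Type*} {s : Set α} {f : α → β}
    {g : α → γ} (hg : (g '' s).Finite) (h : ∀ a ∈ s, ∀ b ∈ s, g a = g b → f a = f b) :
    (f '' s).ncard ≤ (g '' s).ncard := by
  cases isEmpty_or_nonempty α
  · simp [Set.eq_empty_of_isEmpty s]
  have hsurj : Set.SurjOn f s (f '' s) := Set.surjOn_image f s
  refine Set.ncard_le_ncard_of_injOn (g ∘ Function.invFunOn f s)
    (fun b hb => Set.mem_image_of_mem g (hsurj.mapsTo_invFunOn hb)) ?_ hg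
  intro b hb b' hb' hbb'
  rw [← hsurj.rightInvOn_invFunOn hb, ← hsurj.rightInvOn_invFunOn hb']
  exact h _ (hsurj.mapsTo_invFunOn hb) _ (hsurj.mapsTo_invFunOn hb') hbb'

theorem Set.ncard_image_le_ncard_image_mul_card {α β γ δ : Type*} [Finite δ] {s : Set α}
    {f : α → β} {g : α → γ} (h : α → δ) (hg : (g '' s).Finite)
    (hfgh : ∀ a ∈ s, ∀ b ∈ s, g a = g b → h a = h b → f a = f b) :
    (f '' s).ncard ≤ (g '' s).ncard * Nat.card δ :=
  calc (f '' s).ncard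
      ≤ ((fun a => (g a, h a)) '' s).ncard :=
        Set.ncard_image_le_ncard_image_of_eq_imp_eq ((hg.prod Set.finite_univ).subset
          (by rintro _ ⟨a, ha, rfl⟩; exact ⟨⟨a, ha, rfl⟩, trivial⟩))
          fun a ha b hb hab => hfgh a ha b hb (Prod.ext_iff.1 hab).1 (Prod.ext_iff.1 hab).2
    _ ≤ ((g '' s) ×ˢ (Set.univ : Set δ)).ncard :=
        Set.ncard_le_ncard (by rintro _ ⟨a, ha, rfl⟩; exact ⟨⟨a, ha, rfl⟩, trivial⟩)
          (hg.prod Set.finite_univ)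
    _ = (g '' s).ncard * Nat.card δ := by rw [Set.ncard_prod, Set.ncard_univ]

theorem mul_add_one_pow_le_of_pairwiseDisjoint {ι α : Type*} {T : Finset ι}
    {I : Finset ι → Set α} {P : Set α} (hP : P.Finite) (hIP : ∀ S ∈ T.powerset, I S ⊆ P)
    (hI : (T.powerset : Set (Finset ι)).PairwiseDisjoint I) {N m : ℕ}
    (hN : ∀ S ∈ T.powerset, N ≤ m ^ S.card * (I S).ncard) :
    N * (m + 1) ^ T.card ≤ m ^ T.card * P.ncard :=
  calc N * (m + 1) ^ T.card
      = ∑ S ∈ T.powerset, N * m ^ (T.card - S.card) := by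
        rw [← Finset.mul_sum, add_comm, ← Finset.sum_pow_mul_eq_add_pow]
        simp
    _ ≤ ∑ S ∈ T.powerset, m ^ T.card * (I S).ncard := by
        refine Finset.sum_le_sum fun S hS => ?_
        calc N * m ^ (T.card - S.card)
            ≤ m ^ S.card * (I S).ncard * m ^ (T.card - S.card) :=
              Nat.mul_le_mul_right _ (hN S hS)
          _ = m ^ T.card * (I S).ncard := by
              rw [mul_right_comm, ← pow_add,
                Nat.add_sub_cancel' (Finset.card_le_card (Finset.mem_powerset.1 hS))]
    _ = m ^ T.card * (⋃ S ∈ (T.powerset : Set (Finset ι)), I S).ncard := by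
        rw [← Finset.mul_sum, Set.Finite.ncard_biUnion (Finset.finite_toSet _)
          (fun S hS => hP.subset (hIP S hS)) hI, finsum_mem_coe_finset]
    _ ≤ m ^ T.card * P.ncard :=
        Nat.mul_le_mul_left _ (Set.ncard_le_ncard (Set.iUnion₂_subset hIP) hP)

theorem mul_log_le_of_pow_le {m n a b : ℕ} (hm : 0 < m) (ha : 0 < a)
    (h : (m + 1) ^ n ≤ m ^ n * a ^ b) : n * Real.log ((m + 1) / m) ≤ b * Real.log a := by
  have hm' : (0 : ℝ) < m := by exact_mod_cast hm
  have h' : ((m + 1 : ℕ) : ℝ) ^ n ≤ (m : ℝ) ^ n * (a : ℝ) ^ b := by exact_mod_cast h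
  have hlog := Real.log_le_log (by positivity) h'
  rw [Real.log_mul (by positivity) (by positivity), Real.log_pow, Real.log_pow, Real.log_pow]
    at hlog
  rw [Real.log_div (by positivity) hm'.ne']
  push_cast at hlog
  linarith

theorem exists_finset_pi_singleton_subset {ι A : Type*} [TopologicalSpace A] [DiscreteTopology A]
    {x : ι → A} {s : Set (ι → A)} (hs : s ∈ nhds x) :
    ∃ W : Finset ι, (W : Set ι).pi (fun i => {x i}) ⊆ s := by
  rw [nhds_pi, Filter.mem_pi'] at hs
  obtain ⟨I, t, ht, hts⟩ := hs
  refine ⟨I, fun y hy => hts fun i hi => ?_⟩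
  rw [hy i hi]
  exact mem_of_mem_nhds (ht i)

theorem IsCompact.exists_finset_eq_of_continuousOn {ι A B : Type*} [TopologicalSpace A]
    [DiscreteTopology A] [TopologicalSpace B] [DiscreteTopology B] {Z : Set (ι → A)}
    (hZ : IsCompact Z) {f : (ι → A) → B} (hf : ContinuousOn f Z) :
    ∃ W : Finset ι, ∀ z ∈ Z, ∀ z' ∈ Z, (∀ i ∈ W, z i = z' i) → f z = f z' := by
  classical
  have hloc : ∀ z ∈ Z, ∃ W : Finset ι, ∀ z' ∈ Z, (∀ i ∈ W, z' i = z i) → f z' = f z := by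
    intro z hz
    obtain ⟨u, hu, huZ⟩ := mem_nhdsWithin_iff_exists_mem_nhds_inter.1
      (hf z hz (isOpen_discrete {f z} |>.mem_nhds rfl))
    obtain ⟨W, hW⟩ := exists_finset_pi_singleton_subset hu
    exact ⟨W, fun z' hz' hagree => huZ ⟨hW fun i hi => hagree i hi, hz'⟩⟩
  choose! W hW using hloc
  obtain ⟨t, htZ, hcover⟩ := hZ.elim_nhds_subcover (fun z => (W z : Set ι).pi fun i => {z i})
    fun z _ => set_pi_mem_nhds (W z).finite_toSet fun i _ => isOpen_discrete _ |>.mem_nhds rfl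
  refine ⟨t.biUnion W, fun z hz z' hz' hagree => ?_⟩
  obtain ⟨z₀, hz₀t, hzz₀⟩ := Set.mem_iUnion₂.1 (hcover hz)
  have hz₀W : ∀ i ∈ W z₀, i ∈ t.biUnion W := fun i hi => Finset.mem_biUnion.2 ⟨z₀, hz₀t, hi⟩
  rw [hW z₀ (htZ z₀ hz₀t) z hz fun i hi => hzz₀ i hi,
    hW z₀ (htZ z₀ hz₀t) z' hz' fun i hi => (hagree i (hz₀W i hi)).symm.trans (hzz₀ i hi)]

theorem ContinuousOn.invFunOn_image {α β : Type*} [TopologicalSpace α] [TopologicalSpace β]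
    [T2Space β] [Nonempty α] {f : α → β} {s : Set α} (hf : ContinuousOn f s) (hs : IsCompact s)
    (hinj : Set.InjOn f s) : ContinuousOn (Function.invFunOn f s) (f '' s) := by
  refine continuousOn_iff_isClosed.2 fun t ht =>
    ⟨f '' (s ∩ t),
      ((hs.inter_right ht).image_of_continuousOn (hf.mono Set.inter_subset_left)).isClosed, ?_⟩
  ext y
  simp only [Set.mem_inter_iff, Set.mem_preimage, Set.mem_image]
  constructor
  · rintro ⟨hy, x, hx, rfl⟩
    rw [hinj.leftInvOn_invFunOn hx] at hy
    exact ⟨⟨x, ⟨hx, hy⟩, rfl⟩, x, hx, rfl⟩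
  · rintro ⟨⟨x, ⟨hx, hxt⟩, rfl⟩, -⟩
    rw [hinj.leftInvOn_invFunOn hx]
    exact ⟨hxt, x, hx, rfl⟩

theorem exists_memory_set {A B : Type*} [TopologicalSpace A] [DiscreteTopology A]
    [TopologicalSpace B] [DiscreteTopology B] {Z : Set (G → A)} (hZ : IsCompact Z)
    (hZinv : ∀ g : G, ∀ z ∈ Z, shift g z ∈ Z) {φ : (G → A) → (G → B)} (hφ : ContinuousOn φ Z)
    (hφe : ∀ g : G, ∀ z ∈ Z, φ (shift g z) = shift g (φ z)) :
    ∃ M : Finset G, ∀ g : G, ∀ z ∈ Z, ∀ z' ∈ Z,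
      (∀ m ∈ M, z (g * m) = z' (g * m)) → φ z g = φ z' g := by
  obtain ⟨M, hM⟩ := hZ.exists_finset_eq_of_continuousOn
    ((continuous_apply (1 : G)).comp_continuousOn hφ)
  refine ⟨M, fun g z hz z' hz' hagree => ?_⟩
  have hφg : ∀ y ∈ Z, φ y g = φ (shift g⁻¹ y) 1 := fun y hy => by
    rw [hφe _ _ hy]; simp [shift]
  rw [hφg z hz, hφg z' hz']
  exact hM _ (hZinv _ _ hz) _ (hZinv _ _ hz') fun m hm => by simpa [shift] using hagree m hm

theorem IsCellularAutomaton.shift_mem_image {A B : Type*} [TopologicalSpace A]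
    [TopologicalSpace B] {X : Set (G → A)} {Y : Set (G → B)} {τ : (G → A) → (G → B)}
    (hτ : IsCellularAutomaton X Y τ) (hX : ∀ g : G, ∀ x ∈ X, shift g x ∈ X) :
    ∀ g : G, ∀ y ∈ τ '' X, shift g y ∈ τ '' X := by
  rintro g _ ⟨x, hx, rfl⟩
  exact ⟨_, hX g x hx, hτ.2.2 g x hx⟩

theorem IsCellularAutomaton.exists_leftInvOn_memory {A B : Type*} [Nonempty A]
    [TopologicalSpace A] [DiscreteTopology A] [TopologicalSpace B] [DiscreteTopology B]
    {X : Set (G → A)} {Y : Set (G → B)} {τ : (G → A) → (G → B)} (hτ : IsCellularAutomaton X Y τ)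
    (hXc : IsCompact X) (hX : ∀ g : G, ∀ x ∈ X, shift g x ∈ X) (hinj : Set.InjOn τ X) :
    ∃ (σ : (G → B) → (G → A)) (M : Finset G), Set.LeftInvOn σ τ X ∧
      ∀ g : G, ∀ y ∈ τ '' X, ∀ y' ∈ τ '' X,
        (∀ m ∈ M, y (g * m) = y' (g * m)) → σ y g = σ y' g := by
  have hστ : Set.LeftInvOn (Function.invFunOn τ X) τ X := hinj.leftInvOn_invFunOn
  have hσe : ∀ g : G, ∀ y ∈ τ '' X,
      Function.invFunOn τ X (shift g y) = shift g (Function.invFunOn τ X y) := by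
    rintro g _ ⟨x, hx, rfl⟩
    rw [← hτ.2.2 g x hx, hστ hx, hστ (hX g x hx)]
  obtain ⟨M, hM⟩ := exists_memory_set (hXc.image_of_continuousOn hτ.2.1)
    (hτ.shift_mem_image hX) (hτ.2.1.invFunOn_image hXc hinj) hσe
  exact ⟨_, M, hστ, hM⟩

theorem exists_finset_forall_exists_ne {A : Type*} [TopologicalSpace A] [DiscreteTopology A]
    {Y : Set (G → A)} (hY : IsClosed Y) (hYinv : ∀ g : G, ∀ y ∈ Y, shift g y ∈ Y) {z : G → A}
    (hz : z ∉ Y) : ∃ E : Finset G, ∀ y ∈ Y, ∀ t : G, ∃ e ∈ E, y (t * e) ≠ z e := by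
  obtain ⟨E, hE⟩ := exists_finset_pi_singleton_subset (hY.isOpen_compl.mem_nhds hz)
  refine ⟨E, fun y hy t => ?_⟩
  by_contra! h
  exact hE (fun e he => by simpa [shift] using h e he) (hYinv t⁻¹ y hy)

theorem ncard_image_restrict_le_of_memory [DecidableEq G] {A : Type*} [Fintype A]
    {X Y : Set (G → A)} {σ : (G → A) → (G → A)} {M : Finset G} (hXY : X ⊆ σ '' Y)
    (hM : ∀ g : G, ∀ y ∈ Y, ∀ y' ∈ Y, (∀ m ∈ M, y (g * m) = y' (g * m)) → σ y g = σ y' g)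
    (F : Finset G) :
    (F.restrict '' X).ncard ≤
      (F.restrict '' Y).ncard * Fintype.card A ^ ((F * M) \ F).card :=
  calc (F.restrict '' X).ncard
      ≤ (F.restrict '' (σ '' Y)).ncard := Set.ncard_le_ncard (Set.image_mono hXY) (Set.toFinite _)
    _ = ((fun y => F.restrict (σ y)) '' Y).ncard := by rw [Set.image_image]
    _ ≤ (F.restrict '' Y).ncard * Nat.card (((F * M) \ F : Finset G) → A) := by
        refine Set.ncard_image_le_ncard_image_mul_card ((F * M) \ F).restrict (Set.toFinite _)
          fun y hy y' hy' hF hD => funext fun g => hM g y hy y' hy' fun m hm => ?_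
        by_cases hgm : (g : G) * m ∈ F
        · exact congrFun hF ⟨_, hgm⟩
        · exact congrFun hD ⟨_, Finset.mem_sdiff.2 ⟨Finset.mul_mem_mul g.2 hm, hgm⟩⟩
    _ = (F.restrict '' Y).ncard * Fintype.card A ^ ((F * M) \ F).card := by
        rw [Nat.card_eq_fintype_card, Fintype.card_fun, Fintype.card_coe]

theorem DeltaIrreducible.exists_glue [DecidableEq G] {A : Type*} {X : Set (G → A)}
    {Δ E D : Finset G} (hΔ : DeltaIrreducible Δ X) (hX : ∀ g : G, ∀ x ∈ X, shift g x ∈ X)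
    (hED : E ⊆ D) (hEΔD : E * Δ ⊆ D) {z y : G → A} (hz : z ∈ X) (hy : y ∈ X) (Ω : Finset G)
    {S : Finset G} (hS : (S : Set G).PairwiseDisjoint (· • D)) :
    ∃ x ∈ X, (∀ g ∈ Ω, g ∉ S * D → x g = y g) ∧ ∀ t ∈ S, ∀ e ∈ E, x (t * e) = z e := by
  induction S using Finset.induction_on with
  | empty => exact ⟨y, hy, fun _ _ _ => rfl, by simp⟩
  | @insert t S htS ih =>
    have hS' : (S : Set G).PairwiseDisjoint (· • D) :=
      hS.subset (by simp [Finset.coe_insert, Set.subset_insert])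
    obtain ⟨x', hx', hx'y, hx'z⟩ := ih hS'
    -- the patterns of `x'` off the tiles and on `S * E` are at distance `Δ` from `t • E`
    have hsep : plusNbhd ((Ω \ (insert t S * D) ∪ S * E : Finset G) : Set G) (Δ : Set G) ∩
        ((t • E : Finset G) : Set G) = ∅ := by
      refine Set.eq_empty_of_forall_notMem fun g ⟨⟨d, hd, hgd⟩, hg⟩ => ?_
      obtain ⟨e, he, rfl⟩ := Finset.mem_smul_finset.1 hg
      rw [smul_eq_mul, mul_assoc] at hgd
      have hed : e * d ∈ D := hEΔD (Finset.mul_mem_mul he hd)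
      have htile : t * (e * d) ∈ t • D := Finset.smul_mem_smul_finset hed
      rcases Finset.mem_union.1 hgd with hout | hSE
      · exact (Finset.mem_sdiff.1 hout).2
          (Finset.mul_mem_mul (Finset.mem_insert_self t S) hed)
      · obtain ⟨s, hs, e', he', hse⟩ := Finset.mem_mul.1 hSE
        have hst : s ≠ t := fun h => htS (h ▸ hs)
        refine Finset.disjoint_left.1 (hS (by simp [hs]) (by simp) hst) ?_ htile
        rw [← hse]
        exact Finset.smul_mem_smul_finset (hED he')
    obtain ⟨x, hx, hxx', hxz⟩ := hΔ _ _ hsep x' hx' (shift t z) (hX t z hz)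
    refine ⟨x, hx, fun g hg hgS => ?_, fun s hs e he => ?_⟩
    · have hgS' : g ∉ S * D := fun h =>
        hgS (Finset.mul_subset_mul_right (Finset.subset_insert t S) h)
      rw [hxx' g (Finset.mem_union_left _ (Finset.mem_sdiff.2 ⟨hg, hgS⟩)), hx'y g hg hgS']
    · rcases Finset.mem_insert.1 hs with rfl | hs
      · rw [← smul_eq_mul, hxz _ (Finset.smul_mem_smul_finset he)]
        simp [shift]
      · rw [hxx' _ (Finset.mem_union_right _ (Finset.mul_mem_mul hs he)), hx'z s hs e he]

theorem mem_iff_forall_eq_of_eqOn_sdiff_tiles [DecidableEq G] {A : Type*} {E D F S T : Finset G}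
    {x y z : G → A} (hED : E ⊆ D) (hTF : T * D ⊆ F) (hT : (T : Set G).PairwiseDisjoint (· • D))
    (hST : S ⊆ T) (hy : ∀ t : G, ∃ e ∈ E, y (t * e) ≠ z e)
    (hxy : ∀ g ∈ F, g ∉ S * D → x g = y g) (hxz : ∀ t ∈ S, ∀ e ∈ E, x (t * e) = z e)
    {t : G} (ht : t ∈ T) : t ∈ S ↔ ∀ e ∈ E, x (t * e) = z e := by
  refine ⟨hxz t, fun hz => by_contra fun htS => ?_⟩
  obtain ⟨e, he, hne⟩ := hy t
  have hte : t * e ∉ S * D := by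
    rintro hSD
    obtain ⟨s, hs, d, hd, hsd⟩ := Finset.mem_mul.1 hSD
    have hst : s ≠ t := fun h => htS (h ▸ hs)
    exact Finset.disjoint_left.1 (hT (hST hs) ht hst)
      (Finset.mem_smul_finset.2 ⟨d, hd, hsd⟩) (Finset.smul_mem_smul_finset (hED he))
  exact hne (hxy _ (hTF (Finset.mul_mem_mul ht (hED he))) hte ▸ hz e he)

theorem DeltaIrreducible.ncard_image_restrict_mul_le [DecidableEq G] {A : Type*} [Fintype A]
    {X Y : Set (G → A)} {Δ E D : Finset G} {z : G → A} (hΔ : DeltaIrreducible Δ X)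
    (hX : ∀ g : G, ∀ x ∈ X, shift g x ∈ X) (hED : E ⊆ D) (hEΔD : E * Δ ⊆ D) (hz : z ∈ X)
    (hYX : Y ⊆ X) (hmiss : ∀ y ∈ Y, ∀ t : G, ∃ e ∈ E, y (t * e) ≠ z e) {F T : Finset G}
    (hTF : T * D ⊆ F) (hT : (T : Set G).PairwiseDisjoint (· • D)) :
    (F.restrict '' Y).ncard * (Fintype.card A ^ D.card + 1) ^ T.card ≤
      (Fintype.card A ^ D.card) ^ T.card * (F.restrict '' X).ncard := by
  rcases Y.eq_empty_or_nonempty with rfl | ⟨y₀, -⟩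
  · simp
  have ha : 0 < Fintype.card A := Fintype.card_pos_iff.2 ⟨y₀ 1⟩
  have hglue : ∀ S ∈ T.powerset, ∀ y ∈ Y, ∃ x ∈ X, (∀ g ∈ F, g ∉ S * D → x g = y g) ∧
      ∀ t ∈ S, ∀ e ∈ E, x (t * e) = z e := fun S hS y hy =>
    hΔ.exists_glue hX hED hEΔD hz (hYX hy) F (hT.subset (by simpa using hS))
  choose! glue hglueX hglueY hglueZ using hglue
  have hmem : ∀ S ∈ T.powerset, ∀ y ∈ Y, ∀ t ∈ T, t ∈ S ↔ ∀ e ∈ E, glue S y (t * e) = z e :=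
    fun S hS y hy t ht => mem_iff_forall_eq_of_eqOn_sdiff_tiles hED hTF hT
      (Finset.mem_powerset.1 hS) (hmiss y hy) (hglueY S hS y hy) (hglueZ S hS y hy) ht
  refine mul_add_one_pow_le_of_pairwiseDisjoint (I := fun S => (F.restrict ∘ glue S) '' Y)
    (Set.toFinite _) (fun S hS => ?_) (fun S hS S' hS' hne => ?_) (fun S hS => ?_)
  · rintro _ ⟨y, hy, rfl⟩
    exact ⟨_, hglueX S hS y hy, rfl⟩
  · refine Set.disjoint_left.2 ?_
    rintro _ ⟨y, hy, rfl⟩ ⟨y', hy', hyy'⟩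
    refine hne (Finset.ext fun t => ?_)
    by_cases ht : t ∈ T
    · rw [hmem S hS y hy t ht, hmem S' hS' y' hy' t ht]
      refine forall₂_congr fun e he => ?_
      have h : glue S' y' (t * e) = glue S y (t * e) :=
        congrFun hyy' ⟨t * e, hTF (Finset.mul_mem_mul ht (hED he))⟩
      rw [h]
    · exact iff_of_false (fun h => ht (Finset.mem_powerset.1 hS h))
        (fun h => ht (Finset.mem_powerset.1 hS' h))
  · -- a pattern of `Y` is determined by its glued pattern and by its values on the tiles
    calc (F.restrict '' Y).ncard
        ≤ ((F.restrict ∘ glue S) '' Y).ncard * Nat.card ((S * D : Finset G) → A) := by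
          refine Set.ncard_image_le_ncard_image_mul_card (S * D).restrict (Set.toFinite _)
            fun y hy y' hy' hF hD => funext fun g => ?_
          by_cases hg : (g : G) ∈ S * D
          · exact congrFun hD ⟨_, hg⟩
          · change y g = y' g
            rw [← hglueY S hS y hy g g.2 hg, ← hglueY S hS y' hy' g g.2 hg]
            exact congrFun hF g
      _ ≤ (Fintype.card A ^ D.card) ^ S.card * ((F.restrict ∘ glue S) '' Y).ncard := by
          rw [Nat.card_eq_fintype_card, Fintype.card_fun, Fintype.card_coe, mul_comm, ← pow_mul,
            mul_comm D.card]
          exact Nat.mul_le_mul_right _ (Nat.pow_le_pow_right ha Finset.card_mul_le)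

theorem Finset.exists_pairwiseDisjoint_smul_subset_mul [DecidableEq G] (P D : Finset G)
    (hD : D.Nonempty) :
    ∃ T ⊆ P, (T : Set G).PairwiseDisjoint (· • D) ∧ P ⊆ T * (D * D⁻¹) := by
  classical
  obtain ⟨T, hT, hmax⟩ := Finset.exists_max_image
    (P.powerset.filter fun T : Finset G => (T : Set G).PairwiseDisjoint (· • D)) Finset.card
    ⟨∅, by simp⟩
  obtain ⟨hTP, hTdisj⟩ := Finset.mem_filter.1 hT
  refine ⟨T, Finset.mem_powerset.1 hTP, hTdisj, fun g hg => by_contra fun hgT => ?_⟩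
  obtain ⟨d, hd⟩ := hD
  have hgT' : g ∉ T := fun h => hgT (by
    simpa using Finset.mul_mem_mul h (Finset.mul_mem_mul hd (Finset.inv_mem_inv hd)))
  have hdisj : ∀ t ∈ T, Disjoint (g • D) (t • D) := by
    refine fun t ht => Finset.disjoint_left.2 fun u hug hut => hgT ?_
    obtain ⟨d₁, hd₁, rfl⟩ := Finset.mem_smul_finset.1 hug
    obtain ⟨d₂, hd₂, hd₂₁⟩ := Finset.mem_smul_finset.1 hut
    refine Finset.mem_mul.2 ⟨t, ht, d₂ * d₁⁻¹, Finset.mul_mem_mul hd₂ (Finset.inv_mem_inv hd₁), ?_⟩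
    rw [← mul_assoc, ← smul_eq_mul t, hd₂₁, smul_eq_mul, mul_inv_cancel_right]
  have hins : insert g T ∈
      P.powerset.filter fun T : Finset G => (T : Set G).PairwiseDisjoint (· • D) := by
    refine Finset.mem_filter.2 ⟨Finset.mem_powerset.2 (Finset.insert_subset hg
      (Finset.mem_powerset.1 hTP)), ?_⟩
    rw [Finset.coe_insert]
    exact hTdisj.insert fun t ht _ => hdisj t ht
  have := hmax _ hins
  rw [Finset.card_insert_of_notMem hgT'] at this
  omega

theorem Finset.card_sdiff_filter_smul_subset_le [DecidableEq G] (F D : Finset G) :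
    (F \ F.filter fun g => g • D ⊆ F).card ≤ ((F * D) \ F).card * D.card := by
  calc (F \ F.filter fun g => g • D ⊆ F).card
      ≤ (((F * D) \ F) * D⁻¹).card := by
        refine Finset.card_le_card fun g hg => ?_
        obtain ⟨hgF, hgD⟩ := Finset.mem_sdiff.1 hg
        obtain ⟨u, hu, huF⟩ := Finset.not_subset.1 fun h => hgD (Finset.mem_filter.2 ⟨hgF, h⟩)
        obtain ⟨d, hd, rfl⟩ := Finset.mem_smul_finset.1 hu
        refine Finset.mem_mul.2 ⟨g * d, Finset.mem_sdiff.2 ⟨Finset.mul_mem_mul hgF hd, huF⟩, d⁻¹,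
          Finset.inv_mem_inv hd, mul_inv_cancel_right g d⟩
    _ ≤ ((F * D) \ F).card * D.card := by
        simpa only [Finset.card_inv] using Finset.card_mul_le (s := (F * D) \ F) (t := D⁻¹)

theorem Finset.exists_packing [DecidableEq G] (F D : Finset G) (hD : D.Nonempty) :
    ∃ T : Finset G, T * D ⊆ F ∧ (T : Set G).PairwiseDisjoint (· • D) ∧
      F.card ≤ T.card * (D * D⁻¹).card + ((F * D) \ F).card * D.card := by
  obtain ⟨T, hTP, hT, hcover⟩ :=
    Finset.exists_pairwiseDisjoint_smul_subset_mul (F.filter fun g => g • D ⊆ F) D hD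
  refine ⟨T, fun g hg => ?_, hT, ?_⟩
  · obtain ⟨t, ht, d, hd, rfl⟩ := Finset.mem_mul.1 hg
    exact (Finset.mem_filter.1 (hTP ht)).2 (Finset.smul_mem_smul_finset hd)
  · calc F.card
        = (F.filter fun g => g • D ⊆ F).card + (F \ F.filter fun g => g • D ⊆ F).card := by
          rw [add_comm, Finset.card_sdiff_add_card_eq_card (Finset.filter_subset _ F)]
      _ ≤ T.card * (D * D⁻¹).card + ((F * D) \ F).card * D.card :=
          Nat.add_le_add ((Finset.card_le_card hcover).trans Finset.card_mul_le)
            (Finset.card_sdiff_filter_smul_subset_le F D)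

theorem plusNbhd_inv_eq_mul [DecidableEq G] (F E : Finset G) :
    plusNbhd (F : Set G) ((E⁻¹ : Finset G) : Set G) = ((F * E : Finset G) : Set G) := by
  ext g
  simp only [plusNbhd, Finset.coe_inv, Set.mem_inv, Finset.mem_coe, Set.mem_ofPred_eq,
    Finset.coe_mul, Set.mem_mul]
  constructor
  · rintro ⟨d, hd, hgd⟩
    exact ⟨g * d, hgd, d⁻¹, hd, mul_inv_cancel_right g d⟩
  · rintro ⟨f, hf, e, he, rfl⟩
    exact ⟨e⁻¹, by simpa using he, by simpa using hf⟩

theorem IsFolnerNet.tendsto_card_mul_sdiff_div [DecidableEq G] {J : Type*} [Preorder J]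
    {F : J → Finset G} (hF : IsFolnerNet F) (E : Finset G) :
    Tendsto (fun j => (((F j * E) \ F j).card : ℝ) / (F j).card) atTop (nhds 0) := by
  refine (hF.2 E⁻¹).congr fun j => ?_
  rw [plusNbhd_inv_eq_mul, ← Finset.coe_sdiff, Set.ncard_coe_finset]

theorem IsFolnerNet.exists_lt [DecidableEq G] {J : Type*} [Nonempty J] [Preorder J]
    [IsDirected J (· ≤ ·)] {F : J → Finset G} (hF : IsFolnerNet F) {c : ℝ} (hc : 0 < c)
    (α β : ℝ) (M D : Finset G) :
    ∃ j, α * ((F j * M) \ F j).card + β * ((F j * D) \ F j).card < c * (F j).card := by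
  have h := ((hF.tendsto_card_mul_sdiff_div M).const_mul α).add
    ((hF.tendsto_card_mul_sdiff_div D).const_mul β)
  rw [mul_zero, mul_zero, add_zero] at h
  obtain ⟨j, hj⟩ := (h.eventually_lt_const hc).exists
  refine ⟨j, ?_⟩
  have hFj : (0 : ℝ) < (F j).card := by exact_mod_cast (hF.1 j).card_pos
  rwa [mul_div_assoc', mul_div_assoc', ← add_div, div_lt_iff₀ hFj] at hj

theorem log_mul_card_le_of_forall_exists_ne [DecidableEq G] {A : Type*} [Fintype A]
    {X Y : Set (G → A)} {σ : (G → A) → (G → A)} {Δ E D M : Finset G} {z : G → A}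
    (hΔ : DeltaIrreducible Δ X)
    (hX : ∀ g : G, ∀ x ∈ X, shift g x ∈ X) (hED : E ⊆ D) (hEΔD : E * Δ ⊆ D) (hz : z ∈ X)
    (hYX : Y ⊆ X) (hXY : X ⊆ σ '' Y)
    (hM : ∀ g : G, ∀ y ∈ Y, ∀ y' ∈ Y, (∀ m ∈ M, y (g * m) = y' (g * m)) → σ y g = σ y' g)
    (hmiss : ∀ y ∈ Y, ∀ t : G, ∃ e ∈ E, y (t * e) ≠ z e) (F : Finset G) :
    Real.log ((Fintype.card A ^ D.card + 1) / Fintype.card A ^ D.card) * F.card ≤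
      (D * D⁻¹).card * Real.log (Fintype.card A) * ((F * M) \ F).card +
        Real.log ((Fintype.card A ^ D.card + 1) / Fintype.card A ^ D.card) * D.card *
          ((F * D) \ F).card := by
  obtain ⟨y₀, hy₀, -⟩ := hXY hz
  obtain ⟨e₀, he₀, -⟩ := hmiss y₀ hy₀ 1
  obtain ⟨T, hTF, hT, hFT⟩ := Finset.exists_packing F D ⟨e₀, hED he₀⟩
  have ha : 0 < Fintype.card A := Fintype.card_pos_iff.2 ⟨z 1⟩
  set m := Fintype.card A ^ D.card
  have hpow : (m + 1) ^ T.card ≤ m ^ T.card * Fintype.card A ^ ((F * M) \ F).card := by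
    refine Nat.le_of_mul_le_mul_left ?_
      ((Set.ncard_pos (Set.toFinite _)).2 ⟨_, y₀, hy₀, rfl⟩ : 0 < (F.restrict '' Y).ncard)
    calc (F.restrict '' Y).ncard * (m + 1) ^ T.card
        ≤ m ^ T.card * (F.restrict '' X).ncard :=
          hΔ.ncard_image_restrict_mul_le hX hED hEΔD hz hYX hmiss hTF hT
      _ ≤ m ^ T.card * ((F.restrict '' Y).ncard * Fintype.card A ^ ((F * M) \ F).card) :=
          Nat.mul_le_mul_left _ (ncard_image_restrict_le_of_memory hXY hM F)
      _ = (F.restrict '' Y).ncard * (m ^ T.card * Fintype.card A ^ ((F * M) \ F).card) := by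
          ring
  have hlog := mul_log_le_of_pow_le (pow_pos ha _) ha hpow
  set c := Real.log ((Fintype.card A ^ D.card + 1) / Fintype.card A ^ D.card)
  have hc : 0 ≤ c := Real.log_nonneg <| by
    rw [le_div_iff₀ (by positivity)]
    linarith
  push_cast [m] at hlog
  have hFT' : (F.card : ℝ) ≤ T.card * (D * D⁻¹).card + ((F * D) \ F).card * D.card := by
    exact_mod_cast hFT
  calc c * F.card
      ≤ c * (T.card * (D * D⁻¹).card + ((F * D) \ F).card * D.card) :=
        mul_le_mul_of_nonneg_left hFT' hc
    _ = (D * D⁻¹).card * (T.card * c) + c * D.card * ((F * D) \ F).card := by ring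
    _ ≤ (D * D⁻¹).card * (((F * M) \ F).card * Real.log (Fintype.card A)) +
          c * D.card * ((F * D) \ F).card := by gcongr
    _ = _ := by ring

/-- Every strongly irreducible subshift over an amenable group is surjunctive. -/
theorem stronglyIrreducible_surjunctive {A : Type*} [Fintype A]
    [TopologicalSpace A] [DiscreteTopology A]
    {J : Type*} [Nonempty J] [Preorder J] [IsDirected J (· ≤ ·)]
    (F : J → Finset G) (hF : IsFolnerNet F)
    (X : Set (G → A)) (hX : IsSubshift X) (hSI : StronglyIrreducible X)
    (τ : (G → A) → (G → A)) (hτ : IsCellularAutomaton X X τ)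
    (hinj : Set.InjOn τ X) :
    Set.SurjOn τ X X := by
  classical
  intro z hzX
  by_contra hzY
  have : Nonempty A := ⟨z 1⟩
  obtain ⟨Δ, hΔ⟩ := hSI
  obtain ⟨σ, M, hστ, hM⟩ := hτ.exists_leftInvOn_memory hX.1.isCompact hX.2 hinj
  obtain ⟨E, hmiss⟩ := exists_finset_forall_exists_ne
    (hX.1.isCompact.image_of_continuousOn hτ.2.1).isClosed (hτ.shift_mem_image hX.2) hzY
  set D := E * insert 1 Δ
  have hc : 0 < Real.log ((Fintype.card A ^ D.card + 1) / Fintype.card A ^ D.card) :=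
    Real.log_pos <| by
      rw [one_lt_div (by positivity)]
      linarith
  obtain ⟨j, hj⟩ := hF.exists_lt hc _ _ M D
  exact hj.not_ge <| log_mul_card_le_of_forall_exists_ne hΔ hX.2
    (Finset.subset_mul_left E (Finset.mem_insert_self 1 Δ))
    (Finset.mul_subset_mul_left (Finset.subset_insert 1 Δ)) hzX hτ.1.image_subset
    (fun x hx => ⟨τ x, ⟨x, hx, rfl⟩, hστ hx⟩) hM hmiss (F j)
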